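/- arXiv:1807.00851 — 3 statements merged into one kernel-verified Lean document; each statement's English description precedes it below -/
import Mathlib

section
/- Let J ≥ 1 and R ≥ 1. Suppose each job type j has normalized resource requirement vector w_j with 0 < w_{jn} ≤ 1 for all n, and suppose there is an integer N_f ≥ 1 such that N_f · max_n w_{jn} ≤ 1 for every job type j (i.e., at least N_f jobs of any single type fit in the server). Then for every queue vector Q ∈ ℝ^J with Q_j ≥ 0 for all j, the best single-type configuration is an (N_f/(R(N_f+1)))-approximation to the maximum-weight feasible configuration: max_{j} Q_j · ⌊1 / max_n w_{jn}⌋ ≥ (N_f/(R(N_f+1))) · Σ_j Q_j k_j for every feasible configuration k ∈ ℕ^J. Moreover, for each j the single-type configuration ⌊1 / max_n w_{jn}⌋ · e_j is itself feasible. -/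
/-- Greedy single-type configuration is an `N_f/(R(N_f+1))`-approximation to the
max-weight feasible configuration, and each single-type configuration is feasible. -/
theorem stmt_0 (J R : ℕ) (hJ : 1 ≤ J) (hR : 1 ≤ R)
    (w : Fin J → Fin R → ℝ)
    (hwpos : ∀ j n, 0 < w j n) (hwle : ∀ j n, w j n ≤ 1)
    (Nf : ℕ) (hNf : 1 ≤ Nf)
    (hfit : ∀ j, (Nf : ℝ) * (Finset.univ.sup' ⟨⟨0, hR⟩, Finset.mem_univ _⟩ (w j)) ≤ 1)
    (Q : Fin J → ℝ) (hQ : ∀ j, 0 ≤ Q j) :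
    (∀ k : Fin J → ℕ,
      (∀ n, ∑ j, (k j : ℝ) * w j n ≤ 1) →
      Finset.univ.sup' ⟨⟨0, hJ⟩, Finset.mem_univ _⟩
          (fun j => Q j * (⌊1 / Finset.univ.sup' ⟨⟨0, hR⟩, Finset.mem_univ _⟩ (w j)⌋₊ : ℝ))
        ≥ ((Nf : ℝ) / ((R : ℝ) * ((Nf : ℝ) + 1))) * ∑ j, Q j * (k j : ℝ)) ∧
    (∀ j n, (⌊1 / Finset.univ.sup' ⟨⟨0, hR⟩, Finset.mem_univ _⟩ (w j)⌋₊ : ℝ) * w j n ≤ 1) := by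
  set M : Fin J → ℝ := fun j => Finset.univ.sup' ⟨⟨0, hR⟩, Finset.mem_univ _⟩ (w j) with hMdef
  have hMw : ∀ j n, w j n ≤ M j := fun j n => Finset.le_sup' (w j) (Finset.mem_univ n)
  have hMpos : ∀ j, 0 < M j := fun j => lt_of_lt_of_le (hwpos j ⟨0, hR⟩) (hMw j ⟨0, hR⟩)
  set m : Fin J → ℕ := fun j => ⌊1 / M j⌋₊ with hmdef
  have hm_le : ∀ j, (m j : ℝ) ≤ 1 / M j := fun j =>
    Nat.floor_le (le_of_lt (div_pos one_pos (hMpos j)))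
  have hmM : ∀ j, (m j : ℝ) * M j ≤ 1 := by
    intro j
    have := hm_le j
    rw [le_div_iff₀ (hMpos j)] at this
    linarith
  have hm_ge : ∀ j, (Nf : ℝ) ≤ (m j : ℝ) := by
    intro j
    have h1 : (Nf : ℝ) ≤ 1 / M j := (le_div_iff₀ (hMpos j)).2 (by simpa using hfit j)
    exact_mod_cast Nat.le_floor h1
  have hm1 : ∀ j, 1 < ((m j : ℝ) + 1) * M j := by
    intro j
    have h := Nat.lt_floor_add_one (1 / M j)
    rw [div_lt_iff₀ (hMpos j)] at h
    exact h
  have key : ∀ j, (Nf : ℝ) ≤ ((Nf : ℝ) + 1) * (m j : ℝ) * M j := by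
    intro j
    have h1 := hm_ge j
    have h2 := hm1 j
    have hNf1 : (1 : ℝ) ≤ (Nf : ℝ) := by exact_mod_cast hNf
    have hMp := hMpos j
    nlinarith [mul_le_mul_of_nonneg_right h1 (le_of_lt hMp)]
  constructor
  · intro k hk
    set S : ℝ := Finset.univ.sup' ⟨⟨0, hJ⟩, Finset.mem_univ _⟩
      (fun j => Q j * (m j : ℝ)) with hSdef
    have hS : ∀ j, Q j * (m j : ℝ) ≤ S := fun j =>
      Finset.le_sup' (fun j => Q j * (m j : ℝ)) (Finset.mem_univ j)
    have hS0 : 0 ≤ S := le_trans (mul_nonneg (hQ _) (Nat.cast_nonneg _)) (hS ⟨0, hJ⟩)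
    have hMsum : ∀ j, M j ≤ ∑ n, w j n := by
      intro j
      apply Finset.sup'_le
      intro n _
      exact Finset.single_le_sum (fun i _ => le_of_lt (hwpos j i)) (Finset.mem_univ n)
    have hsum1 : ∑ j, (k j : ℝ) * M j ≤ (R : ℝ) := by
      calc ∑ j, (k j : ℝ) * M j ≤ ∑ j, (k j : ℝ) * ∑ n, w j n := by
            apply Finset.sum_le_sum
            intro j _
            exact mul_le_mul_of_nonneg_left (hMsum j) (Nat.cast_nonneg _)
        _ = ∑ n, ∑ j, (k j : ℝ) * w j n := by
            simp_rw [Finset.mul_sum]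
            rw [Finset.sum_comm]
        _ ≤ ∑ _n : Fin R, (1 : ℝ) := Finset.sum_le_sum (fun n _ => hk n)
        _ = (R : ℝ) := by simp
    have hj : ∀ j, (Nf : ℝ) * (Q j * (k j : ℝ)) ≤ ((Nf : ℝ) + 1) * S * ((k j : ℝ) * M j) := by
      intro j
      have hk0 : (0 : ℝ) ≤ (k j : ℝ) := Nat.cast_nonneg _
      have t1 : 0 ≤ Q j * (k j : ℝ) * (((Nf : ℝ) + 1) * (m j : ℝ) * M j - (Nf : ℝ)) :=
        mul_nonneg (mul_nonneg (hQ j) hk0) (by linarith [key j])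
      have t2 : 0 ≤ ((Nf : ℝ) + 1) * (k j : ℝ) * M j * (S - Q j * (m j : ℝ)) := by
        apply mul_nonneg
        · have : (0:ℝ) ≤ (Nf : ℝ) + 1 := by positivity
          exact mul_nonneg (mul_nonneg this hk0) (le_of_lt (hMpos j))
        · linarith [hS j]
      nlinarith [t1, t2]
    have hsum2 : (Nf : ℝ) * ∑ j, Q j * (k j : ℝ) ≤ ((Nf : ℝ) + 1) * S * (R : ℝ) := by
      calc (Nf : ℝ) * ∑ j, Q j * (k j : ℝ) = ∑ j, (Nf : ℝ) * (Q j * (k j : ℝ)) := by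
            rw [Finset.mul_sum]
        _ ≤ ∑ j, ((Nf : ℝ) + 1) * S * ((k j : ℝ) * M j) := Finset.sum_le_sum (fun j _ => hj j)
        _ = ((Nf : ℝ) + 1) * S * ∑ j, (k j : ℝ) * M j := by rw [Finset.mul_sum]
        _ ≤ ((Nf : ℝ) + 1) * S * (R : ℝ) := by
            apply mul_le_mul_of_nonneg_left (hsum1)
            positivity
    rw [ge_iff_le, div_mul_eq_mul_div, div_le_iff₀ (by positivity : (0:ℝ) < (R : ℝ) * ((Nf : ℝ) + 1))]
    nlinarith [hsum2]
  · intro j n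
    calc (m j : ℝ) * w j n ≤ (m j : ℝ) * M j :=
          mul_le_mul_of_nonneg_left (hMw j n) (Nat.cast_nonneg _)
      _ ≤ 1 := hmM j
end

section
/- Let J ≥ 1, let K be a finite set of nonzero vectors in ℕ^J that contains all J standard basis vectors, let k̃ ∈ K, and let 0 < β < r ≤ 1. Suppose q₀ ∈ ℝ^J has nonnegative entries and satisfies ⟨k̃, q₀⟩ ≥ r·⟨k, q₀⟩ for every k ∈ K. Then for every k ∈ K, ⟨k̃ − β·k, q₀⟩ ≥ (1 − β/r)·(r/√J)·‖q₀‖. -/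
/-- Uniform margin for an `r`-max weight configuration against the stalling
condition: `⟨k̃ − β·k, q₀⟩ ≥ (1 − β/r)(r/√J)‖q₀‖` for every `k ∈ K`. -/
theorem stmt_5 (J : ℕ) (hJ : 1 ≤ J)
    (K : Finset (Fin J → ℕ))
    (hK0 : ∀ k ∈ K, k ≠ 0)
    (hKbasis : ∀ j₀ : Fin J, (fun j => if j = j₀ then 1 else 0) ∈ K)
    (ktil : Fin J → ℕ) (hktil : ktil ∈ K)
    (β r : ℝ) (hβ : 0 < β) (hβr : β < r) (hr : r ≤ 1)
    (q₀ : Fin J → ℝ) (hq₀ : ∀ j, 0 ≤ q₀ j)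
    (hrmax : ∀ k ∈ K, ∑ j, (ktil j : ℝ) * q₀ j ≥ r * ∑ j, (k j : ℝ) * q₀ j) :
    ∀ k ∈ K, ∑ j, ((ktil j : ℝ) - β * (k j : ℝ)) * q₀ j ≥
      (1 - β / r) * (r / Real.sqrt J) * Real.sqrt (∑ j, (q₀ j) ^ 2) := by
  intro k hk
  have hr0 : (0:ℝ) < r := hβ.trans hβr
  set S : ℝ := ∑ j, (ktil j : ℝ) * q₀ j with hS
  -- argmax
  have hne : (Finset.univ : Finset (Fin J)).Nonempty := ⟨⟨0, hJ⟩, Finset.mem_univ _⟩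
  obtain ⟨j₀, -, hj₀⟩ := Finset.exists_max_image Finset.univ q₀ hne
  have hmax : ∀ j, q₀ j ≤ q₀ j₀ := fun j => hj₀ j (Finset.mem_univ j)
  -- S ≥ r * q₀ j₀
  have hbasis := hrmax _ (hKbasis j₀)
  have hsum : (∑ j, (((fun j => if j = j₀ then 1 else 0 : Fin J → ℕ) j : ℝ)) * q₀ j)
      = q₀ j₀ := by
    rw [Finset.sum_eq_single j₀]
    · simp
    · intro b _ hb; simp [hb]
    · simp
  rw [hsum] at hbasis
  -- norm bound
  have hq2 : ∑ j, (q₀ j) ^ 2 ≤ (J : ℝ) * (q₀ j₀) ^ 2 := by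
    calc ∑ j, (q₀ j) ^ 2 ≤ ∑ _j : Fin J, (q₀ j₀) ^ 2 :=
          Finset.sum_le_sum fun j _ => pow_le_pow_left₀ (hq₀ j) (hmax j) 2
      _ = (J : ℝ) * (q₀ j₀) ^ 2 := by simp [mul_comm]
  have hJpos : (0:ℝ) < (J:ℝ) := by exact_mod_cast hJ
  have hsqrt : Real.sqrt (∑ j, (q₀ j) ^ 2) ≤ Real.sqrt J * q₀ j₀ := by
    have h0 : 0 ≤ q₀ j₀ := hq₀ j₀
    calc Real.sqrt (∑ j, (q₀ j) ^ 2) ≤ Real.sqrt ((J:ℝ) * (q₀ j₀)^2) :=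
          Real.sqrt_le_sqrt hq2
      _ = Real.sqrt J * q₀ j₀ := by
          rw [Real.sqrt_mul (le_of_lt hJpos), Real.sqrt_sq h0]
  have hsqrtJ : (0:ℝ) < Real.sqrt J := Real.sqrt_pos.mpr hJpos
  -- key: (r/√J) * √∑ ≤ S
  have hkey : r / Real.sqrt J * Real.sqrt (∑ j, (q₀ j) ^ 2) ≤ S := by
    calc r / Real.sqrt J * Real.sqrt (∑ j, (q₀ j) ^ 2)
        ≤ r / Real.sqrt J * (Real.sqrt J * q₀ j₀) := by
          apply mul_le_mul_of_nonneg_left hsqrt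
          positivity
      _ = r * q₀ j₀ := by field_simp
      _ ≤ S := hbasis
  -- LHS ≥ (1 - β/r) S
  have hkq : ∑ j, (k j : ℝ) * q₀ j ≤ S / r :=
    (le_div_iff₀' hr0).mpr (hrmax k hk)
  have hLHS : (1 - β / r) * S ≤ ∑ j, ((ktil j : ℝ) - β * (k j : ℝ)) * q₀ j := by
    have : ∑ j, ((ktil j : ℝ) - β * (k j : ℝ)) * q₀ j
        = S - β * ∑ j, (k j : ℝ) * q₀ j := by
      rw [hS, Finset.mul_sum, ← Finset.sum_sub_distrib]
      congr 1; ext j; ring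
    rw [this]
    have hb : β * ∑ j, (k j : ℝ) * q₀ j ≤ β * (S / r) :=
      mul_le_mul_of_nonneg_left hkq hβ.le
    have : (1 - β / r) * S = S - β * (S / r) := by field_simp
    rw [this]
    linarith
  have hcoef : 0 ≤ 1 - β / r := by
    rw [sub_nonneg, div_le_one hr0]; exact hβr.le
  calc (1 - β / r) * (r / Real.sqrt J) * Real.sqrt (∑ j, (q₀ j) ^ 2)
      = (1 - β / r) * (r / Real.sqrt J * Real.sqrt (∑ j, (q₀ j) ^ 2)) := by ring
    _ ≤ (1 - β / r) * S := mul_le_mul_of_nonneg_left hkey hcoef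
    _ ≤ _ := hLHS
end

section
/- Let J ≥ 1, let K be a finite set of nonzero vectors in ℕ^J that contains all J standard basis vectors, let k̃ ∈ K, and let 0 < β < r ≤ 1. Then there exists a constant C > 0, depending only on K, k̃, r, β and J, with the following property: for all q₀, q ∈ ℝ^J with nonnegative entries, if ⟨k̃, q₀⟩ ≥ r·⟨k, q₀⟩ for every k ∈ K and ‖q − q₀‖ < C·‖q₀‖, then ⟨k̃, q⟩ ≥ β·⟨k, q⟩ for every k ∈ K. -/
/-- Cauchy–Schwarz in the form `|∑ f g| ≤ √(∑ f²) · √(∑ g²)`. -/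
lemma abs_sum_mul_le_sqrt_mul_sqrt {J : ℕ} (f g : Fin J → ℝ) :
    |∑ j, f j * g j| ≤ Real.sqrt (∑ j, f j ^ 2) * Real.sqrt (∑ j, g j ^ 2) := by
  have h := Finset.sum_mul_sq_le_sq_mul_sq Finset.univ f g
  have h1 : |∑ j, f j * g j| = Real.sqrt ((∑ j, f j * g j) ^ 2) := by
    rw [Real.sqrt_sq_eq_abs]
  rw [h1, ← Real.sqrt_mul (by positivity)]
  exact Real.sqrt_le_sqrt h

/-- For nonnegative entries, `√(∑ f²) ≤ ∑ f`. -/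
lemma sqrt_sum_sq_le_sum {J : ℕ} (f : Fin J → ℝ) (hf : ∀ j, 0 ≤ f j) :
    Real.sqrt (∑ j, f j ^ 2) ≤ ∑ j, f j := by
  have h : (∑ j, f j ^ 2) ≤ (∑ j, f j) ^ 2 := by
    rw [sq]
    rw [Finset.sum_mul]
    refine Finset.sum_le_sum fun j _ => ?_
    rw [sq]
    exact mul_le_mul_of_nonneg_left
      (Finset.single_le_sum (fun i _ => hf i) (Finset.mem_univ j)) (hf j)
  calc Real.sqrt (∑ j, f j ^ 2) ≤ Real.sqrt ((∑ j, f j) ^ 2) := Real.sqrt_le_sqrt h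
    _ = ∑ j, f j := Real.sqrt_sq (Finset.sum_nonneg fun j _ => hf j)

/-- Deterministic core of Lemma 1: there is `C > 0` such that if `k̃` is an
`r`-max weight configuration for `q₀` and the queue vector `q` differs from
`q₀` by less than `C‖q₀‖`, then the stalling condition `⟨k̃,q⟩ < β⟨k,q⟩`
fails for every `k ∈ K`. -/
theorem stmt_6 (J : ℕ) (hJ : 1 ≤ J)
    (K : Finset (Fin J → ℕ))
    (hK0 : ∀ k ∈ K, k ≠ 0)
    (hKbasis : ∀ j₀ : Fin J, (fun j => if j = j₀ then 1 else 0) ∈ K)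
    (ktil : Fin J → ℕ) (hktil : ktil ∈ K)
    (β r : ℝ) (hβ : 0 < β) (hβr : β < r) (hr : r ≤ 1) :
    ∃ C : ℝ, 0 < C ∧
      ∀ q₀ q : Fin J → ℝ, (∀ j, 0 ≤ q₀ j) → (∀ j, 0 ≤ q j) →
        (∀ k ∈ K, ∑ j, (ktil j : ℝ) * q₀ j ≥ r * ∑ j, (k j : ℝ) * q₀ j) →
        Real.sqrt (∑ j, (q j - q₀ j) ^ 2) < C * Real.sqrt (∑ j, (q₀ j) ^ 2) →
        ∀ k ∈ K, ∑ j, (ktil j : ℝ) * q j ≥ β * ∑ j, (k j : ℝ) * q j := by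
  classical
  -- bound on the norms of configurations
  set S : ℝ := ∑ k ∈ K, ∑ j, (k j : ℝ) with hS
  have hSterms : ∀ k ∈ K, (∑ j, (k j : ℝ)) ≤ S := by
    intro k hk
    exact Finset.single_le_sum
      (f := fun k : Fin J → ℕ => ∑ j, (k j : ℝ))
      (fun i _ => Finset.sum_nonneg fun j _ => Nat.cast_nonneg _) hk
  have hS1 : (1 : ℝ) ≤ S := by
    obtain ⟨j, hj⟩ : ∃ j, ktil j ≠ 0 := by
      by_contra h
      push_neg at h
      exact hK0 ktil hktil (funext fun j => h j)
    have h1 : (1 : ℝ) ≤ ∑ j, (ktil j : ℝ) := by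
      have hone : (1 : ℝ) ≤ (ktil j : ℝ) := by exact_mod_cast Nat.one_le_iff_ne_zero.2 hj
      calc (1 : ℝ) ≤ (ktil j : ℝ) := hone
        _ ≤ ∑ i, (ktil i : ℝ) :=
          Finset.single_le_sum (f := fun i => (ktil i : ℝ))
            (fun i _ => Nat.cast_nonneg _) (Finset.mem_univ j)
    exact h1.trans (hSterms ktil hktil)
  have hSpos : (0 : ℝ) < S := lt_of_lt_of_le one_pos hS1
  have hJpos : (0 : ℝ) < (J : ℝ) := by exact_mod_cast hJ
  have hrpos : (0 : ℝ) < r := hβ.trans hβr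
  -- the constant
  have hrb : 0 < r - β := by linarith
  refine ⟨(r - β) / (S * J * (1 + β)), by positivity, ?_⟩
  intro q₀ q hq₀ hq hmax hball k hk
  set C : ℝ := (r - β) / (S * J * (1 + β)) with hC
  set d : ℝ := Real.sqrt (∑ j, (q j - q₀ j) ^ 2) with hd
  set n0 : ℝ := Real.sqrt (∑ j, (q₀ j) ^ 2) with hn0
  set T : ℝ := ∑ j, (ktil j : ℝ) * q₀ j with hT
  have hdnn : 0 ≤ d := Real.sqrt_nonneg _
  have hn0nn : 0 ≤ n0 := Real.sqrt_nonneg _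
  -- norm bound for any k' ∈ K
  have hknorm : ∀ k' ∈ K, Real.sqrt (∑ j, ((k' j : ℝ)) ^ 2) ≤ S := fun k' hk' =>
    (sqrt_sum_sq_le_sum _ (fun j => by positivity)).trans (hSterms k' hk')
  -- inner product perturbation bound
  have hpert : ∀ k' ∈ K, |∑ j, (k' j : ℝ) * q j - ∑ j, (k' j : ℝ) * q₀ j| ≤ S * d := by
    intro k' hk'
    have heq : ∑ j, (k' j : ℝ) * q j - ∑ j, (k' j : ℝ) * q₀ j
        = ∑ j, (k' j : ℝ) * (q j - q₀ j) := by
      rw [← Finset.sum_sub_distrib]; congr 1; funext j; ring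
    rw [heq]
    calc |∑ j, (k' j : ℝ) * (q j - q₀ j)|
        ≤ Real.sqrt (∑ j, ((k' j : ℝ)) ^ 2) * d := abs_sum_mul_le_sqrt_mul_sqrt _ _
      _ ≤ S * d := mul_le_mul_of_nonneg_right (hknorm k' hk') hdnn
  -- each coordinate of q₀ bounded by T / r
  have hq₀j : ∀ j, r * q₀ j ≤ T := by
    intro j
    have h := hmax _ (hKbasis j)
    have hsum : ∑ i, ((if i = j then 1 else 0 : ℕ) : ℝ) * q₀ i = q₀ j := by
      rw [Finset.sum_eq_single j] <;> simp +contextual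
    rw [hsum] at h
    exact h
  have hTnn : 0 ≤ T := by
    rw [hT]
    exact Finset.sum_nonneg fun j _ => mul_nonneg (Nat.cast_nonneg _) (hq₀ j)
  -- n0 ≤ (J/r) T
  have hn0T : r * n0 ≤ J * T := by
    have h1 : n0 ≤ ∑ j, q₀ j := sqrt_sum_sq_le_sum _ hq₀
    have h2 : r * ∑ j, q₀ j ≤ J * T := by
      have h3 : ∑ j : Fin J, r * q₀ j ≤ ∑ _j : Fin J, T :=
        Finset.sum_le_sum fun j _ => hq₀j j
      simpa [Finset.mul_sum, Finset.sum_const, Finset.card_univ, mul_comm] using h3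
    calc r * n0 ≤ r * ∑ j, q₀ j := mul_le_mul_of_nonneg_left h1 hrpos.le
      _ ≤ J * T := h2
  -- from the ball hypothesis
  have hdC : d < C * n0 := hball
  have hCS : S * C * (1 + β) * J = r - β := by
    rw [hC]; field_simp
  have hdT : S * d * (1 + β) * r < (r - β) * T := by
    have h1 : S * (1 + β) * r * d < S * (1 + β) * r * (C * n0) :=
      mul_lt_mul_of_pos_left hdC (by positivity)
    have h2 : (J : ℝ) * (S * (1 + β) * r * (C * n0)) = (r - β) * (r * n0) := by
      rw [← hCS]; ring
    have h3 : (r - β) * (r * n0) ≤ (r - β) * (J * T) :=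
      mul_le_mul_of_nonneg_left hn0T (by linarith)
    nlinarith [mul_lt_mul_of_pos_left h1 hJpos]
  -- conclude
  have hkq₀ : r * ∑ j, (k j : ℝ) * q₀ j ≤ T := hmax k hk
  have hA := hpert ktil hktil
  have hB := hpert k hk
  rw [abs_le] at hA hB
  rw [ge_iff_le]
  have hAk : T - S * d ≤ ∑ j, (ktil j : ℝ) * q j := by linarith [hA.1]
  have hBk : ∑ j, (k j : ℝ) * q j - S * d ≤ ∑ j, (k j : ℝ) * q₀ j := by linarith [hB.2]
  -- r * β * B ≤ β * T + r * β * S d ≤ r * T - r * S d ≤ r * A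
  have hrB : r * (∑ j, (k j : ℝ) * q j) ≤ T + r * (S * d) := by nlinarith [hBk, hkq₀]
  have hfin : r * (β * ∑ j, (k j : ℝ) * q j) ≤ r * (∑ j, (ktil j : ℝ) * q j) := by
    nlinarith [mul_le_mul_of_nonneg_left hrB hβ.le,
      mul_le_mul_of_nonneg_left hAk hrpos.le, hdT]
  exact le_of_mul_le_mul_left hfin hrpos
end
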